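/- If p = a/2^T with a an integer, 0 ≤ a < 2^{T−1} (so p ≤ 1/2 − 2^{−T}), then taking k = T gives α_T² = 1/2 and β_T² = 2p², and α_T² > (25/9)·β_T² whenever p ≤ 3/10; more generally, for every such p there exists k ∈ {0,…,T} with α_k² > (25/9)·β_k². -/
import Mathlib


set_option maxHeartbeats 1000000 in
/-- For `p = a/2^T < 1/2`: at `k = T`, `α_T² = 1/2` and `β_T² = 2p²`, with
`α_T² > (25/9)β_T²` whenever `p ≤ 3/10`; and some `k ≤ T` achieves the `25/9` separation. -/
theorem k_eq_T_separation (T : ℕ) (hT : 1 ≤ T) (a : ℕ) (ha : a < 2 ^ (T - 1))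
    (p : ℝ) (hp : p = (a : ℝ) / 2 ^ T)
    (α β : ℕ → ℝ)
    (hα : ∀ k ≤ T, α k = ((1 / 2 + p) + 2 ^ (T - k) * (1 / 2 - p)) / Real.sqrt 2)
    (hβ : ∀ k ≤ T, β k = ((1 / 2 + p) - 2 ^ (T - k) * (1 / 2 - p)) / Real.sqrt 2) :
    α T ^ 2 = 1 / 2 ∧ β T ^ 2 = 2 * p ^ 2 ∧
    (p ≤ 3 / 10 → α T ^ 2 > (25 / 9) * β T ^ 2) ∧
    ∃ k ≤ T, α k ^ 2 > (25 / 9) * β k ^ 2 := by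
  classical
  have h2 : Real.sqrt 2 ^ 2 = 2 := Real.sq_sqrt (by norm_num)
  have hp0 : 0 ≤ p := by rw [hp]; positivity
  -- α T ^ 2 = 1/2
  have e1 : α T = 1 / Real.sqrt 2 := by
    rw [hα T le_rfl, Nat.sub_self, pow_zero]; ring
  have hA : α T ^ 2 = 1 / 2 := by rw [e1, div_pow, h2, one_pow]
  -- β T ^ 2 = 2 p^2
  have e2 : β T = (2 * p) / Real.sqrt 2 := by
    rw [hβ T le_rfl, Nat.sub_self, pow_zero]; ring
  have hB : β T ^ 2 = 2 * p ^ 2 := by rw [e2, div_pow, h2]; ring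
  -- p ≠ 3/10 (dyadic)
  have hne : p ≠ 3 / 10 := by
    intro h
    rw [hp] at h
    have h2T : (0:ℝ) < 2 ^ T := by positivity
    have hℝ : (10 * a : ℝ) = 3 * 2 ^ T := by field_simp at h; linarith
    have hℕ : 10 * a = 3 * 2 ^ T := by exact_mod_cast hℝ
    have h5 : (5:ℕ) ∣ 3 * 2 ^ T := ⟨2 * a, by omega⟩
    rcases (Nat.Prime.dvd_mul (by norm_num)).mp h5 with h' | h'
    · norm_num at h'
    · have := Nat.Prime.dvd_of_dvd_pow (p := 5) (by norm_num) h'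
      norm_num at this
  -- p + 2^{-T} ≤ 1/2, i.e. 2^T * (1/2 - p) ≥ 1
  have hcast : (a:ℝ) + 1 ≤ 2 ^ (T - 1) := by
    have : a + 1 ≤ 2 ^ (T - 1) := ha
    exact_mod_cast this
  have hTsplit : (2:ℝ) ^ T = 2 ^ (T - 1) * 2 := by
    rw [← pow_succ]
    congr 1
    omega
  have h2T : (0:ℝ) < 2 ^ T := by positivity
  have hu1 : (1:ℝ) ≤ 2 ^ T * (1 / 2 - p) := by
    rw [hp]
    have : (2:ℝ) ^ T * ((1:ℝ) / 2 - (a:ℝ) / 2 ^ T) = 2 ^ (T - 1) - a := by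
      field_simp
      rw [hTsplit]; ring
    rw [this]
    linarith
  have hu0 : 0 < (1:ℝ) / 2 - p := by
    by_contra h
    push_neg at h
    nlinarith
  have hs0 : 0 < 1 / 2 + p := by linarith
  have hps : p < 1 / 2 := by linarith
  -- main separation lemma for a chosen k
  have main : ∃ k ≤ T, α k ^ 2 > (25 / 9) * β k ^ 2 := by
    obtain ⟨s, hsdef⟩ : ∃ s : ℝ, s = 1 / 2 + p := ⟨_, rfl⟩
    obtain ⟨u, hudef⟩ : ∃ u : ℝ, u = 1 / 2 - p := ⟨_, rfl⟩
    simp only [← hsdef, ← hudef] at hα hβ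
    have hs0' : 0 < s := by rw [hsdef]; linarith
    have hu0' : 0 < u := by rw [hudef]; linarith
    have hus : u ≤ s := by rw [hsdef, hudef]; linarith
    have hs1 : s < 1 := by rw [hsdef]; linarith
    have hu1' : (1:ℝ) ≤ 2 ^ T * u := by rw [hudef]; exact hu1
    have hPT : s / 4 < 2 ^ T * u := by linarith
    have hex : ∃ m, s / 4 < 2 ^ m * u := ⟨T, hPT⟩
    set m := Nat.find hex with hmdef
    have hm : s / 4 < 2 ^ m * u := Nat.find_spec hex
    have hmT : m ≤ T := Nat.find_min' hex hPT
    have hupper : 2 ^ m * u < 4 * s := by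
      rcases Nat.eq_zero_or_pos m with h0 | h1
      · rw [h0, pow_zero, one_mul]
        linarith
      · have hmin := Nat.find_min hex (show m - 1 < m by omega)
        push_neg at hmin
        have hsplit : (2:ℝ) ^ m = 2 ^ (m - 1) * 2 := by
          rw [← pow_succ]; congr 1; omega
        rw [hsplit]
        nlinarith
    refine ⟨T - m, Nat.sub_le _ _, ?_⟩
    rw [hα _ (Nat.sub_le _ _), hβ _ (Nat.sub_le _ _), Nat.sub_sub_self hmT,
      div_pow, div_pow, h2]
    have key : 0 < (4 * s - 2 ^ m * u) * (4 * (2 ^ m * u) - s) := by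
      apply mul_pos <;> linarith
    rw [gt_iff_lt]
    nlinarith [key]
  refine ⟨hA, hB, ?_, main⟩
  intro hple
  have hlt : p < 3 / 10 := lt_of_le_of_ne hple hne
  rw [hA, hB]
  nlinarith
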